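/- For all integers r, s ≥ 1, the mobile general position number of the corona product of complete graphs satisfies mob(K_r ⊙ K_s) = max{r, s + 1}. -/

import Mathlib

open SimpleGraph

/-- `S` is a general position set of `G`: for all `u, v ∈ S`, every shortest `u,v`-path
contains no vertex of `S` other than `u` and `v`. -/
def IsGPSet {V : Type*} (G : SimpleGraph V) (S : Set V) : Prop :=
  ∀ u ∈ S, ∀ v ∈ S, ∀ p : G.Walk u v, p.IsPath → p.length = G.dist u v →
    ∀ w ∈ p.support, w ∈ S → w = u ∨ w = v

/-- A legal move from the configuration `S` to the configuration `T`: a robot at `u ∈ S`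
moves to an adjacent unoccupied vertex `v ∉ S` so that the resulting configuration
`(S \ {u}) ∪ {v}` is again a general position set. -/
def LegalMove {V : Type*} (G : SimpleGraph V) (S T : Set V) : Prop :=
  IsGPSet G S ∧ ∃ u ∈ S, ∃ v, v ∉ S ∧ G.Adj u v ∧
    T = insert v (S \ {u}) ∧ IsGPSet G T

/-- `S` is a mobile general position set: there is a finite sequence of configurations
`S = S_0, S_1, …, S_k`, each obtained from the previous one by a legal move, whose union
is the whole vertex set. -/
def IsMobileGPSet {V : Type*} (G : SimpleGraph V) (S : Set V) : Prop :=
  IsGPSet G S ∧ ∃ (k : ℕ) (f : ℕ → Set V), f 0 = S ∧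
    (∀ i < k, LegalMove G (f i) (f (i + 1))) ∧
    (⋃ i ∈ Set.Iic k, f i) = Set.univ

/-- The mobile general position number of `G`: the maximum cardinality of a mobile
general position set. -/
noncomputable def mob {V : Type*} (G : SimpleGraph V) : ℕ :=
  sSup {n | ∃ S : Set V, IsMobileGPSet G S ∧ S.ncard = n}

/-- The corona product `G ⊙ H`: one copy of `G` and, for each vertex `i` of `G`, one copy
of `H` (on vertices `{i} × V(H)`) with all edges between `i` and that copy. -/
def corona {α β : Type*} (G : SimpleGraph α) (H : SimpleGraph β) : SimpleGraph (α ⊕ α × β) :=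
  SimpleGraph.fromRel (fun x y =>
    (∃ u v, x = Sum.inl u ∧ y = Sum.inl v ∧ G.Adj u v) ∨
    (∃ i a b, x = Sum.inr (i, a) ∧ y = Sum.inr (i, b) ∧ H.Adj a b) ∨
    (∃ i a, x = Sum.inl i ∧ y = Sum.inr (i, a)))

/-!
In `K_r ⊙ K_s` the distance between vertices `x, y` of different closed cliques `{i} ∪ K_s^i` is
`1 + ℓ x + ℓ y`, where `ℓ` is `0` on `K_r` and `1` on the copies of `K_s`. Hence a vertex lies
strictly between two others only if it is a centre `i` and one of the two is a leaf at `i`: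
a general position set either never holds a centre together with one of its leaves, or lies in
a single closed clique, of size `s + 1`.

If a mobile set has more than `s + 1` robots, two robots in a copy `K_s^j` can never leave it
(one stepping to the centre would meet the other), so the centre `j` would never be visited;
thus every copy together with its centre carries at most one robot, and there are at most `r`.
Conversely the set of all centres is mobile (each robot visits its leaves), and so is a closed
clique (its centre visits every other centre and, from there, its leaves).
-/

section GeneralPosition

variable {V : Type*} {G : SimpleGraph V} {S T : Set V}

theorem SimpleGraph.Reachable.two_lt_dist {u v : V} (h : G.Reachable u v) (hne : u ≠ v)
    (hadj : ¬G.Adj u v) (hcommon : ∀ w, G.Adj u w → ¬G.Adj w v) : 2 < G.dist u v := by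
  refine lt_of_le_of_ne (h.one_lt_dist_of_ne_of_not_adj hne hadj) fun h2 => ?_
  obtain ⟨p, hp⟩ := h.exists_walk_length_eq_dist
  have h0 := p.adj_getVert_succ (i := 0) (by omega)
  have h1 := p.adj_getVert_succ (i := 1) (by omega)
  rw [p.getVert_zero] at h0
  rw [show 1 + 1 = p.length by omega, p.getVert_length] at h1
  exact hcommon _ h0 h1

theorem isGPSet_iff_dist (hG : G.Preconnected) :
    IsGPSet G S ↔ ∀ u ∈ S, ∀ v ∈ S, ∀ w ∈ S,
      G.dist u w + G.dist w v = G.dist u v → w = u ∨ w = v := by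
  constructor
  · intro hS u hu v hv w hw hsum
    obtain ⟨p, hp⟩ := (hG u w).exists_walk_length_eq_dist
    obtain ⟨q, hq⟩ := (hG w v).exists_walk_length_eq_dist
    have hlen : (p.append q).length = G.dist u v := by rw [Walk.length_append, hp, hq, hsum]
    exact hS u hu v hv _ ((p.append q).isPath_of_length_eq_dist hlen) hlen w (by simp) hw
  · classical
    intro h u hu v hv p _ hp w hwp hw
    refine h u hu v hv w hw (le_antisymm ?_ ((hG w v).dist_triangle_right u))
    calc G.dist u w + G.dist w v
        ≤ (p.takeUntil w hwp).length + (p.dropUntil w hwp).length :=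
          add_le_add (dist_le _) (dist_le _)
      _ = G.dist u v := by rw [← Walk.length_append, p.take_spec hwp, hp]

theorem isGPSet_of_isClique (hG : G.Preconnected) (hS : G.IsClique S) : IsGPSet G S := by
  rw [isGPSet_iff_dist hG]
  intro u hu v hv w hw hsum
  by_contra! hne
  have huw := (hG u w).pos_dist_of_ne hne.1.symm
  have hwv := (hG w v).pos_dist_of_ne hne.2
  have huv : G.dist u v ≤ 1 := by
    by_cases h : u = v
    · simp [h]
    · exact (dist_eq_one_iff_adj.mpr (hS hu hv h)).le
  omega

theorem LegalMove.symm (h : LegalMove G S T) : LegalMove G T S := by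
  obtain ⟨hS, u, hu, v, hv, huv, rfl, hT⟩ := h
  refine ⟨hT, v, Set.mem_insert _ _, u, by simp [huv.ne], huv.symm, ?_, hS⟩
  rw [Set.insert_sdiff_self_of_notMem (by simp [hv]), Set.insert_sdiff_singleton,
    Set.insert_eq_of_mem hu]

theorem LegalMove.ncard_eq [Finite V] (h : LegalMove G S T) : T.ncard = S.ncard := by
  obtain ⟨-, u, hu, v, hv, -, rfl, -⟩ := h
  rw [Set.ncard_insert_of_notMem (by simp [hv]), Set.ncard_sdiff_singleton_add_one hu]

def moveGraph (G : SimpleGraph V) : SimpleGraph (Set V) :=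
  SimpleGraph.fromRel (LegalMove G)

theorem moveGraph_adj : (moveGraph G).Adj S T ↔ LegalMove G S T := by
  refine ⟨fun h => ((fromRel_adj _ _ _).mp h).2.elim id LegalMove.symm,
    fun h => (fromRel_adj _ _ _).mpr ⟨?_, Or.inl h⟩⟩
  obtain ⟨-, -, -, v, hv, -, rfl, -⟩ := h
  exact fun h => hv (h ▸ Set.mem_insert _ _)

theorem isMobileGPSet_of_reachable [Fintype V] (hS : IsGPSet G S)
    (h : ∀ x, ∃ T, x ∈ T ∧ (moveGraph G).Reachable S T) : IsMobileGPSet G S := by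
  classical
  have hclosed : ∀ F : Finset V,
      ∃ w : (moveGraph G).Walk S S, ∀ x ∈ F, ∃ X ∈ w.support, x ∈ X := by
    intro F
    induction F using Finset.induction_on with
    | empty => exact ⟨Walk.nil, by simp⟩
    | insert x F _ ih =>
      obtain ⟨w, hw⟩ := ih
      obtain ⟨T, hxT, ⟨p⟩⟩ := h x
      refine ⟨(p.append p.reverse).append w, ?_⟩
      simp only [Finset.mem_insert, forall_eq_or_imp, Walk.mem_support_append_iff]
      exact ⟨⟨T, Or.inl (Or.inl p.end_mem_support), hxT⟩,
        fun y hy => (hw y hy).imp fun X hX => ⟨Or.inr hX.1, hX.2⟩⟩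
  obtain ⟨w, hw⟩ := hclosed Finset.univ
  refine ⟨hS, w.length, w.getVert, w.getVert_zero,
    fun i hi => moveGraph_adj.mp (w.adj_getVert_succ hi), Set.eq_univ_of_forall fun x => ?_⟩
  obtain ⟨X, hX, hxX⟩ := hw x (Finset.mem_univ x)
  obtain ⟨n, rfl, hn⟩ := Walk.mem_support_iff_exists_getVert.mp hX
  exact Set.mem_biUnion (Set.mem_Iic.mpr hn) hxX

end GeneralPosition

section Corona

variable {α β : Type*}

def coronaBase : α ⊕ α × β → α := Sum.elim id Prod.fst

def coronaLevel : α ⊕ α × β → ℕ := Sum.elim (fun _ => 0) (fun _ => 1)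

def coronaLeaves (i : α) : Set (α ⊕ α × β) := Set.range fun b => Sum.inr (i, b)

variable {i j : α} {a b : β}

@[simp]
theorem inl_notMem_coronaLeaves : (Sum.inl j : α ⊕ α × β) ∉ coronaLeaves i := by
  simp [coronaLeaves]

@[simp]
theorem inr_mem_coronaLeaves : (Sum.inr (j, b) : α ⊕ α × β) ∈ coronaLeaves i ↔ j = i := by
  simp [coronaLeaves, eq_comm]

theorem ncard_insert_inl_coronaLeaves [Finite β] :
    (insert (Sum.inl i) (coronaLeaves i : Set (α ⊕ α × β))).ncard = Nat.card β + 1 := by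
  rw [Set.ncard_insert_of_notMem inl_notMem_coronaLeaves (Set.finite_range _), coronaLeaves,
    Set.ncard_range_of_injective fun a b h => by simpa using h]

section Adj

variable {G : SimpleGraph α} {H : SimpleGraph β}

@[simp]
theorem corona_adj_inl_inl : (corona G H).Adj (.inl i) (.inl j) ↔ G.Adj i j := by
  simp only [corona, fromRel_adj]
  aesop (add simp G.adj_comm)

@[simp]
theorem corona_adj_inl_inr : (corona G H).Adj (.inl i) (.inr (j, b)) ↔ i = j := by
  simp only [corona, fromRel_adj]
  aesop

@[simp]
theorem corona_adj_inr_inl : (corona G H).Adj (.inr (i, a)) (.inl j) ↔ i = j := by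
  rw [adj_comm, corona_adj_inl_inr, eq_comm]

@[simp]
theorem corona_adj_inr_inr :
    (corona G H).Adj (.inr (i, a)) (.inr (j, b)) ↔ i = j ∧ H.Adj a b := by
  simp only [corona, fromRel_adj]
  aesop (add simp H.adj_comm)

end Adj

local notation "𝒦" => corona (⊤ : SimpleGraph α) (⊤ : SimpleGraph β)

theorem corona_top_reachable_inl_coronaBase (x : α ⊕ α × β) :
    (𝒦).Reachable x (.inl (coronaBase x)) := by
  rcases x with i | ⟨i, a⟩
  · rfl
  · exact (corona_adj_inr_inl.mpr rfl).reachable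

theorem corona_top_preconnected : (𝒦).Preconnected := by
  intro x y
  refine (corona_top_reachable_inl_coronaBase x).trans
    (Reachable.trans ?_ (corona_top_reachable_inl_coronaBase y).symm)
  by_cases h : coronaBase x = coronaBase y
  · rw [h]
  · exact (corona_adj_inl_inl.mpr h).reachable

theorem corona_top_dist_inl_inr (h : i ≠ j) :
    (𝒦).dist (.inl i) (.inr (j, b)) = 2 := by
  refine le_antisymm ?_ ((corona_top_preconnected _ _).one_lt_dist_of_ne_of_not_adj
    Sum.inl_ne_inr (by simpa using h))
  exact dist_le (.cons (corona_adj_inl_inl.mpr ((top_adj _ _).mpr h))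
    (.cons (corona_adj_inl_inr.mpr rfl) .nil))

theorem corona_top_dist_inr_inr (h : i ≠ j) :
    (𝒦).dist (.inr (i, a)) (.inr (j, b)) = 3 := by
  refine le_antisymm ?_
    ((corona_top_preconnected _ _).two_lt_dist (by simp [h]) (by simp [h]) ?_)
  · exact dist_le (.cons (corona_adj_inr_inl.mpr rfl) (.cons
      (corona_adj_inl_inl.mpr ((top_adj _ _).mpr h)) (.cons (corona_adj_inl_inr.mpr rfl) .nil)))
  · rintro (k | ⟨k, c⟩) h1 h2 <;> simp_all

theorem corona_top_dist [DecidableEq α] [DecidableEq β] (x y : α ⊕ α × β) :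
    (𝒦).dist x y = if x = y then 0 else if coronaBase x = coronaBase y then 1
      else coronaLevel x + coronaLevel y + 1 := by
  split_ifs with hxy hb
  · simp [hxy]
  · refine dist_eq_one_iff_adj.mpr ?_
    rcases x with _ | ⟨_, _⟩ <;> rcases y with _ | ⟨_, _⟩ <;> simp_all [coronaBase]
  · rcases x with i | ⟨i, a⟩ <;> rcases y with j | ⟨j, b⟩ <;>
      simp only [coronaBase, coronaLevel, Sum.elim_inl, Sum.elim_inr, id] at hb ⊢
    · exact dist_eq_one_iff_adj.mpr (by simpa using hb)
    · exact corona_top_dist_inl_inr hb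
    · rw [dist_comm]
      exact corona_top_dist_inl_inr (Ne.symm hb)
    · exact corona_top_dist_inr_inr hb

theorem corona_top_eq_inl_of_dist_add_dist_eq {u v w : α ⊕ α × β}
    (h : (𝒦).dist u w + (𝒦).dist w v = (𝒦).dist u v) (hwu : w ≠ u) (hwv : w ≠ v) :
    ∃ k a, w = .inl k ∧ (u = .inr (k, a) ∨ v = .inr (k, a)) := by
  classical
  rw [corona_top_dist, corona_top_dist, corona_top_dist, if_neg hwu.symm, if_neg hwv] at h
  split_ifs at h <;>
    rcases u with i | ⟨i, a⟩ <;> rcases w with k | ⟨k, c⟩ <;> rcases v with j | ⟨j, b⟩ <;>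
    simp_all [coronaBase, coronaLevel]

variable {S T : Set (α ⊕ α × β)}

theorem isGPSet_corona_top_of_inr_notMem
    (hS : ∀ i a, Sum.inl i ∈ S → Sum.inr (i, a) ∉ S) : IsGPSet 𝒦 S := by
  rw [isGPSet_iff_dist corona_top_preconnected]
  intro u hu v hv w hw h
  by_contra! hne
  obtain ⟨k, a, rfl, rfl | rfl⟩ := corona_top_eq_inl_of_dist_add_dist_eq h hne.1 hne.2
  exacts [hS k a hw hu, hS k a hw hv]

theorem IsGPSet.subset_insert_inl_coronaLeaves (hS : IsGPSet 𝒦 S) (hj : Sum.inl j ∈ S)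
    (hb : Sum.inr (j, b) ∈ S) : S ⊆ insert (Sum.inl j) (coronaLeaves j) := by
  classical
  intro x hx
  by_contra hx'
  have hxj : coronaBase x ≠ j := by
    rintro rfl
    rcases x with i | ⟨i, a⟩ <;> simp [coronaBase] at hx'
  have hsum :
      (𝒦).dist x (.inl j) + (𝒦).dist (.inl j) (.inr (j, b)) = (𝒦).dist x (.inr (j, b)) := by
    rcases x with i | ⟨i, a⟩ <;> simp_all [corona_top_dist, coronaBase, coronaLevel]
  rcases (isGPSet_iff_dist corona_top_preconnected).mp hS x hx _ hb _ hj hsum with h | h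
  · exact hx' (h ▸ Set.mem_insert _ _)
  · exact Sum.inl_ne_inr h

theorem IsGPSet.corona_top_inr_notMem [Finite β] (hS : IsGPSet 𝒦 S)
    (hcard : Nat.card β + 1 < S.ncard) : ∀ i a, Sum.inl i ∈ S → Sum.inr (i, a) ∉ S := by
  intro i a hi ha
  have := Set.ncard_le_ncard (hS.subset_insert_inl_coronaLeaves hi ha)
    ((Set.finite_range _).insert _)
  rw [ncard_insert_inl_coronaLeaves] at this
  omega

theorem LegalMove.corona_top_exists_two_leaves (hST : LegalMove 𝒦 S T)
    (hT : ∀ i a, Sum.inl i ∈ T → Sum.inr (i, a) ∉ T) {j : α} {b c : β} (hbc : b ≠ c)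
    (hb : Sum.inr (j, b) ∈ S) (hc : Sum.inr (j, c) ∈ S) :
    ∃ b' c', b' ≠ c' ∧ Sum.inr (j, b') ∈ T ∧ Sum.inr (j, c') ∈ T := by
  obtain ⟨-, u, hu, v, hv, huv, rfl, -⟩ := hST
  -- the robot leaving `inr (j, b)` cannot go to the centre `j`, next to the robot at `inr (j, c)`
  have hleave : ∀ b c : β, b ≠ c → Sum.inr (j, c) ∈ S → u = Sum.inr (j, b) →
      ∃ b' c', b' ≠ c' ∧ Sum.inr (j, b') ∈ insert v (S \ {u}) ∧
        Sum.inr (j, c') ∈ insert v (S \ {u}) := by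
    rintro b c hbc hc rfl
    have hcT : Sum.inr (j, c) ∈ insert v (S \ {Sum.inr (j, b)}) := by simp [hc, Ne.symm hbc]
    rcases v with k | ⟨k, d⟩
    · obtain rfl : j = k := by simpa using huv
      exact absurd hcT (hT j c (Set.mem_insert _ _))
    · obtain ⟨rfl, -⟩ : j = k ∧ b ≠ d := by simpa using huv
      exact ⟨d, c, fun h => hv (h ▸ hc), Set.mem_insert _ _, hcT⟩
  by_cases hub : u = Sum.inr (j, b)
  · exact hleave b c hbc hc hub
  by_cases huc : u = Sum.inr (j, c)
  · obtain ⟨b', c', h⟩ := hleave c b hbc.symm hb huc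
    exact ⟨b', c', h⟩
  exact ⟨b, c, hbc, by simp [hb, Ne.symm hub], by simp [hc, Ne.symm huc]⟩

theorem ncard_le_card_of_inr_notMem [Finite α]
    (hpair : ∀ i a, Sum.inl i ∈ S → Sum.inr (i, a) ∉ S)
    (hleaf : ∀ i a b, Sum.inr (i, a) ∈ S → Sum.inr (i, b) ∈ S → a = b) :
    S.ncard ≤ Nat.card α := by
  have hinj : Set.InjOn coronaBase S := by
    rintro (i | ⟨i, a⟩) hx (j | ⟨j, b⟩) hy hij <;>
      simp only [coronaBase, Sum.elim_inl, Sum.elim_inr, id] at hij <;> subst hij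
    · rfl
    · exact absurd hy (hpair i b hx)
    · exact absurd hx (hpair i a hy)
    · rw [hleaf i a b hx hy]
  simpa using Set.ncard_le_ncard_of_injOn coronaBase (fun _ _ => Set.mem_univ _) hinj

theorem IsMobileGPSet.ncard_le_corona_top [Finite α] [Finite β] (hS : IsMobileGPSet 𝒦 S) :
    S.ncard ≤ max (Nat.card α) (Nat.card β + 1) := by
  obtain ⟨hGP, k, f, rfl, hmove, hcover⟩ := hS
  by_contra! hbig
  rw [max_lt_iff] at hbig
  have hinv : ∀ t ≤ k, IsGPSet 𝒦 (f t) ∧ (f t).ncard = (f 0).ncard := by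
    intro t ht
    induction t with
    | zero => exact ⟨hGP, rfl⟩
    | succ t ih =>
      have hmv := hmove t ht
      exact ⟨hmv.symm.1, hmv.ncard_eq.trans (ih (by omega)).2⟩
  have hfree : ∀ t ≤ k, ∀ i a, Sum.inl i ∈ f t → Sum.inr (i, a) ∉ f t := fun t ht =>
    (hinv t ht).1.corona_top_inr_notMem ((hinv t ht).2 ▸ hbig.2)
  -- two robots in one copy of `K_s` stay there forever, so its centre is never visited
  have hleaf : ∀ j a b, Sum.inr (j, a) ∈ f 0 → Sum.inr (j, b) ∈ f 0 → a = b := by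
    intro j a b ha hb
    by_contra hab
    have htwo : ∀ t ≤ k, ∃ b c, b ≠ c ∧ Sum.inr (j, b) ∈ f t ∧ Sum.inr (j, c) ∈ f t := by
      intro t ht
      induction t with
      | zero => exact ⟨a, b, hab, ha, hb⟩
      | succ t ih =>
        obtain ⟨b, c, hbc, hb, hc⟩ := ih (by omega)
        exact (hmove t ht).corona_top_exists_two_leaves (hfree _ ht) hbc hb hc
    obtain ⟨t, ht, hjt⟩ : ∃ t ≤ k, Sum.inl j ∈ f t := by
      have : Sum.inl j ∈ ⋃ i ∈ Set.Iic k, f i := hcover ▸ Set.mem_univ _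
      simpa using this
    obtain ⟨b, -, -, hb, -⟩ := htwo t ht
    exact hfree t ht j b hjt hb
  exact hbig.1.not_ge (ncard_le_card_of_inr_notMem (hfree 0 k.zero_le) hleaf)

theorem isMobileGPSet_corona_top_range_inl [Fintype α] [Fintype β] :
    IsMobileGPSet 𝒦 (Set.range Sum.inl) := by
  have hS : IsGPSet 𝒦 (Set.range Sum.inl) := isGPSet_corona_top_of_inr_notMem (by simp)
  refine isMobileGPSet_of_reachable hS ?_
  rintro (j | ⟨j, a⟩)
  · exact ⟨_, Set.mem_range_self j, .refl _⟩
  · refine ⟨_, Set.mem_insert _ _, (moveGraph_adj.mpr ⟨hS, .inl j, Set.mem_range_self j,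
      .inr (j, a), by simp, corona_adj_inl_inr.mpr rfl, rfl, ?_⟩).reachable⟩
    exact isGPSet_corona_top_of_inr_notMem (by aesop)

theorem isMobileGPSet_corona_top_insert_inl_coronaLeaves [Fintype α] [Fintype β] (z : α) :
    IsMobileGPSet 𝒦 (insert (Sum.inl z) (coronaLeaves z)) := by
  have hS : IsGPSet 𝒦 (insert (Sum.inl z) (coronaLeaves z)) := by
    refine isGPSet_of_isClique corona_top_preconnected (IsClique.insert ?_ ?_)
    · rintro _ ⟨a, rfl⟩ _ ⟨b, rfl⟩ hab
      simpa using hab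
    · rintro _ ⟨a, rfl⟩ -
      exact corona_adj_inl_inr.mpr rfl
  -- the centre robot tours the other centres, and from centre `j` it may step to a leaf of `j`
  have hcentre : ∀ j ≠ z, (moveGraph 𝒦).Reachable (insert (Sum.inl z) (coronaLeaves z))
      (insert (Sum.inl j) (coronaLeaves z)) := by
    intro j hj
    refine (moveGraph_adj.mpr ⟨hS, .inl z, Set.mem_insert _ _, .inl j, by simp [hj],
      corona_adj_inl_inl.mpr ((top_adj _ _).mpr (Ne.symm hj)), ?_, ?_⟩).reachable
    · rw [Set.insert_sdiff_self_of_notMem inl_notMem_coronaLeaves]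
    · exact isGPSet_corona_top_of_inr_notMem (by aesop)
  refine isMobileGPSet_of_reachable hS ?_
  rintro (j | ⟨j, a⟩) <;> by_cases hj : j = z
  · exact ⟨_, hj ▸ Set.mem_insert _ _, .refl _⟩
  · exact ⟨_, Set.mem_insert _ _, hcentre j hj⟩
  · exact ⟨_, Set.mem_insert_of_mem _ (inr_mem_coronaLeaves.mpr hj), .refl _⟩
  · have hmv : LegalMove 𝒦 (insert (Sum.inl j) (coronaLeaves z))
        (insert (Sum.inr (j, a)) (coronaLeaves z)) := by
      refine ⟨?_, .inl j, Set.mem_insert _ _, .inr (j, a), by simp [hj],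
        corona_adj_inl_inr.mpr rfl, ?_, ?_⟩
      · exact isGPSet_corona_top_of_inr_notMem (by aesop)
      · rw [Set.insert_sdiff_self_of_notMem inl_notMem_coronaLeaves]
      · exact isGPSet_corona_top_of_inr_notMem (by aesop)
    exact ⟨_, Set.mem_insert _ _, (hcentre j hj).trans (moveGraph_adj.mpr hmv).reachable⟩

theorem mob_corona_top [Fintype α] [Nonempty α] [Fintype β] :
    mob 𝒦 = max (Nat.card α) (Nat.card β + 1) := by
  refine IsGreatest.csSup_eq ⟨?_, fun n ⟨S, hS, hn⟩ => hn ▸ hS.ncard_le_corona_top⟩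
  rcases max_choice (Nat.card α) (Nat.card β + 1) with h | h <;> rw [h]
  · exact ⟨_, isMobileGPSet_corona_top_range_inl,
      Set.ncard_range_of_injective Sum.inl_injective⟩
  · exact ⟨_, isMobileGPSet_corona_top_insert_inl_coronaLeaves (Classical.arbitrary α),
      ncard_insert_inl_coronaLeaves⟩

end Corona

theorem mob_corona_complete_general (r s : ℕ) (hr : 1 ≤ r) :
    mob (corona (⊤ : SimpleGraph (Fin r)) (⊤ : SimpleGraph (Fin s))) = max r (s + 1) := by
  have : Nonempty (Fin r) := ⟨⟨0, hr⟩⟩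
  simpa using mob_corona_top (α := Fin r) (β := Fin s)

theorem mob_corona_complete (r s : ℕ) (hr : 1 ≤ r) (hs : 1 ≤ s) :
    mob (corona (⊤ : SimpleGraph (Fin r)) (⊤ : SimpleGraph (Fin s))) = max r (s + 1) :=
  mob_corona_complete_general r s hr
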